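/- Consider a society with three communities A, B, D, each consisting of one man and one woman, with the cyclic preference profile: m^A ranks w^B ≻ w^D ≻ w^A; m^B ranks w^D ≻ w^A ≻ w^B; m^D ranks w^A ≻ w^B ≻ w^D; w^A ranks m^B ≻ m^D ≻ m^A; w^B ranks m^D ≻ m^A ≻ m^B; w^D ranks m^A ≻ m^B ≻ m^D. Then (i) every Pareto optimal matching scheme σ satisfies σ(w^A, {A,B}) = m^B, σ(w^B, {B,D}) = m^D, and σ(w^D, {D,A}) = m^A; and (ii) there is no matching μ of all six agents such that simultaneously μ(m^A) ⪰_{m^A} w^B, μ(w^A) ⪰_{w^A} m^B, μ(m^B) ⪰_{m^B} w^D, μ(w^B) ⪰_{w^B} m^D, μ(m^D) ⪰_{m^D} w^A, and μ(w^D) ⪰_{w^D} m^A. Consequently, no Pareto optimal matching scheme for this profile is integration monotonic. -/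

import Mathlib

/-!
On each two-community population, the matching that pairs every man with the woman of the
other community gives every agent their favourite partner, so it is the unique Pareto optimal
matching; this is (i). In the whole society, `m^A` is weakly better off than with `w^B` only by
marrying `w^B`, his favourite, and then `w^B` is worse off than with `m^D`; this is (ii).
Integration monotonicity from each pair to the whole society would produce exactly the matching
excluded by (ii).
-/

/-- A strict preference profile: each agent `x` has a strict total order over
agents of the opposite gender, and prefers any such partner to being unmatched
(i.e. to "obtaining" him/herself). `pref x a b` means `x` strictly prefers `a` to `b`. -/
structure Prefs (Agent : Type) (man : Agent → Bool) where
  pref : Agent → Agent → Agent → Prop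
  irrefl : ∀ x a, ¬ pref x a a
  trans : ∀ x a b c, pref x a b → pref x b c → pref x a c
  total : ∀ x a b, man a ≠ man x → man b ≠ man x → a ≠ b → pref x a b ∨ pref x b a
  worst : ∀ x a, man a ≠ man x → pref x a x

/-- `x` weakly prefers `a` to `b`. -/
def Prefs.weakPref {Agent : Type} {man : Agent → Bool} (P : Prefs Agent man)
    (x a b : Agent) : Prop := a = b ∨ P.pref x a b

/-- A matching on the set of agents `A`: a function of order two matching
men only to women (or to themselves, meaning unmatched), fixing agents outside `A`. -/
structure IsMatching {Agent : Type} (man : Agent → Bool) (A : Set Agent)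
    (μ : Agent → Agent) : Prop where
  mem : ∀ x ∈ A, μ x ∈ A
  invol : ∀ x ∈ A, μ (μ x) = x
  opp : ∀ x ∈ A, μ x ≠ x → man (μ x) ≠ man x
  fix : ∀ x ∉ A, μ x = x

/-- A matching is stable if there is no blocking pair: a man `m` and a woman `w`,
not married to each other, each strictly preferring the other to their own partner. -/
def IsStable {Agent : Type} {man : Agent → Bool} (P : Prefs Agent man)
    (A : Set Agent) (μ : Agent → Agent) : Prop :=
  IsMatching man A μ ∧
    ¬ ∃ m ∈ A, ∃ w ∈ A, man m ≠ man w ∧ μ m ≠ w ∧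
      P.pref m w (μ m) ∧ P.pref w m (μ w)

/-- A matching is Pareto optimal if no matching on the same agents makes every
agent weakly better off and some agent strictly better off. -/
def IsPareto {Agent : Type} {man : Agent → Bool} (P : Prefs Agent man)
    (A : Set Agent) (μ : Agent → Agent) : Prop :=
  IsMatching man A μ ∧
    ¬ ∃ μ' : Agent → Agent, IsMatching man A μ' ∧
      (∀ x ∈ A, P.weakPref x (μ' x) (μ x)) ∧
      ∃ y ∈ A, P.pref y (μ' y) (μ y)

/-- Genders in the six-agent example: agent 0 is `m^A`, 1 is `w^A`, 2 is `m^B`,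
3 is `w^B`, 4 is `m^D`, 5 is `w^D` (even-numbered agents are men). -/
def man6 : Fin 6 → Bool := fun x => decide (x.val % 2 = 0)

/-- Communities in the six-agent example: agents 0,1 form community `A` (0),
agents 2,3 form community `B` (1), agents 4,5 form community `D` (2). -/
def comm6 : Fin 6 → Fin 3 := fun x => ⟨x.val / 2, by have := x.isLt; omega⟩

namespace Prefs

variable {Agent : Type} {man : Agent → Bool} (P : Prefs Agent man)

def IsFavorite (A : Set Agent) (x a : Agent) : Prop :=
  ∀ y ∈ A, (y = x ∨ man y ≠ man x) → P.weakPref x a y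

variable {P}

lemma asymm {x a b : Agent} (h : P.pref x a b) : ¬ P.pref x b a :=
  fun h' => P.irrefl x a (P.trans x a b a h h')

lemma weakPref_antisymm {x a b : Agent} (hab : P.weakPref x a b) (hba : P.weakPref x b a) :
    a = b := by
  rcases hab with rfl | hab
  · rfl
  · rcases hba with rfl | hba
    · rfl
    · exact absurd hba (asymm hab)

end Prefs

section Matching

variable {Agent : Type} {man : Agent → Bool} {P : Prefs Agent man} {A : Set Agent}
  {μ ν : Agent → Agent}

lemma IsMatching.eq_or_man_ne (hμ : IsMatching man A μ) {x : Agent} (hx : x ∈ A) :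
    μ x = x ∨ man (μ x) ≠ man x :=
  or_iff_not_imp_left.mpr (hμ.opp x hx)

lemma Prefs.IsFavorite.weakPref_apply {x a : Agent} (h : P.IsFavorite A x a)
    (hμ : IsMatching man A μ) (hx : x ∈ A) : P.weakPref x a (μ x) :=
  h _ (hμ.mem x hx) (hμ.eq_or_man_ne hx)

lemma IsPareto.eq_of_isFavorite (hμ : IsPareto P A μ) (hν : IsMatching man A ν)
    (hfav : ∀ x ∈ A, P.IsFavorite A x (ν x)) {x : Agent} (hx : x ∈ A) : μ x = ν x := by
  rcases (hfav x hx).weakPref_apply hμ.1 hx with h | h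
  · exact h.symm
  · exact (hμ.2 ⟨ν, hν, fun y hy => (hfav y hy).weakPref_apply hμ.1 hy, x, hx, h⟩).elim

lemma IsMatching.not_weakPref_and_weakPref (hμ : IsMatching man A μ) {m w m' : Agent}
    (hm : m ∈ A) (hfav : P.IsFavorite A m w) (hw : P.pref w m' m) :
    ¬ (P.weakPref m (μ m) w ∧ P.weakPref w (μ w) m') := by
  rintro ⟨hmw, hwm'⟩
  have hμm : μ m = w := Prefs.weakPref_antisymm hmw (hfav.weakPref_apply hμ hm)
  have hμw : μ w = m := hμm ▸ hμ.invol m hm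
  rw [hμw] at hwm'
  rcases hwm' with rfl | h
  · exact P.irrefl _ _ hw
  · exact Prefs.asymm hw h

end Matching

section Cross

variable {Agent : Type} [DecidableEq Agent] {man : Agent → Bool} {p q r s : Agent}

lemma swap_mul_swap_apply (hpq : p ≠ q) (hpr : p ≠ r) (hqs : q ≠ s) (hrs : r ≠ s) :
    (Equiv.swap p s * Equiv.swap q r) p = s ∧ (Equiv.swap p s * Equiv.swap q r) q = r ∧
      (Equiv.swap p s * Equiv.swap q r) r = q ∧ (Equiv.swap p s * Equiv.swap q r) s = p := by
  simp only [Equiv.Perm.mul_apply, Equiv.swap_apply_left, Equiv.swap_apply_right]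
  exact ⟨by rw [Equiv.swap_apply_of_ne_of_ne hpq hpr, Equiv.swap_apply_left],
    Equiv.swap_apply_of_ne_of_ne hpr.symm hrs, Equiv.swap_apply_of_ne_of_ne hpq.symm hqs,
    by rw [Equiv.swap_apply_of_ne_of_ne hqs.symm hrs.symm, Equiv.swap_apply_right]⟩

lemma isMatching_swap_mul_swap (hp : man p = true) (hq : man q = false) (hr : man r = true)
    (hs : man s = false) (hpr : p ≠ r) (hqs : q ≠ s) :
    IsMatching man {p, q, r, s} ⇑(Equiv.swap p s * Equiv.swap q r) := by
  have hpq : p ≠ q := by rintro rfl; simp_all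
  have hrs : r ≠ s := by rintro rfl; simp_all
  obtain ⟨hνp, hνq, hνr, hνs⟩ := swap_mul_swap_apply hpq hpr hqs hrs
  constructor
  · rintro x (rfl | rfl | rfl | rfl) <;> simp [hνp, hνq, hνr, hνs]
  · rintro x (rfl | rfl | rfl | rfl) <;> simp [hνp, hνq, hνr, hνs]
  · rintro x (rfl | rfl | rfl | rfl) <;> simp [*]
  · intro x hx
    simp only [Set.mem_insert_iff, Set.mem_singleton_iff, not_or] at hx
    simp [Equiv.swap_apply_of_ne_of_ne, hx]

-- Every agent gets their favourite partner in `p–s, q–r`.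
theorem IsPareto.cross {P : Prefs Agent man} {μ : Agent → Agent} (hp : man p = true)
    (hq : man q = false) (hr : man r = true) (hs : man s = false) (hpr : p ≠ r) (hqs : q ≠ s)
    (hpsq : P.pref p s q) (hqrp : P.pref q r p) (hrqs : P.pref r q s) (hspr : P.pref s p r)
    (hμ : IsPareto P {p, q, r, s} μ) : μ p = s ∧ μ q = r := by
  have hpq : p ≠ q := by rintro rfl; simp_all
  have hrs : r ≠ s := by rintro rfl; simp_all
  obtain ⟨hνp, hνq, hνr, hνs⟩ := swap_mul_swap_apply hpq hpr hqs hrs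
  have hfav : ∀ x ∈ ({p, q, r, s} : Set Agent),
      P.IsFavorite {p, q, r, s} x ((Equiv.swap p s * Equiv.swap q r) x) := by
    rintro x (rfl | rfl | rfl | rfl) y (rfl | rfl | rfl | rfl) hy <;>
      simp only [hνp, hνq, hνr, hνs] <;>
      first
        | exact Or.inl rfl
        | exact Or.inr ‹_›
        | exact Or.inr (P.worst _ _ (by simp [*]))
        | simp [*, hpr.symm, hqs.symm] at hy
  have hν := isMatching_swap_mul_swap hp hq hr hs hpr hqs
  exact ⟨hνp ▸ hμ.eq_of_isFavorite hν hfav (by simp),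
    hνq ▸ hμ.eq_of_isFavorite hν hfav (by simp)⟩

end Cross

lemma Prefs.isFavorite_univ_zero_three {P : Prefs (Fin 6) man6} (hmA1 : P.pref 0 3 5)
    (hmA2 : P.pref 0 5 1) : P.IsFavorite Set.univ 0 3 := by
  intro y _ hy
  fin_cases y
  · exact Or.inr (P.worst 0 3 (by decide))
  · exact Or.inr (P.trans _ _ _ _ hmA1 hmA2)
  · exact absurd hy (by decide)
  · exact Or.inl rfl
  · exact absurd hy (by decide)
  · exact Or.inr hmA1

lemma partners_on_pairs_of_isPareto {P : Prefs (Fin 6) man6}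
    (hmA1 : P.pref 0 3 5) (hmA2 : P.pref 0 5 1) (hmB1 : P.pref 2 5 1) (hmB2 : P.pref 2 1 3)
    (hmD1 : P.pref 4 1 3) (hmD2 : P.pref 4 3 5) (hwA1 : P.pref 1 2 4) (hwA2 : P.pref 1 4 0)
    (hwB1 : P.pref 3 4 0) (hwB2 : P.pref 3 0 2) (hwD1 : P.pref 5 0 2) (hwD2 : P.pref 5 2 4)
    (σ : Fin 6 → Set (Fin 3) → Fin 6)
    (hσ : ∀ Q : Set (Fin 3), IsPareto P {x | comm6 x ∈ Q} (fun x => σ x Q)) :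
    (σ 0 {0, 1} = 3 ∧ σ 1 {0, 1} = 2) ∧ (σ 2 {1, 2} = 5 ∧ σ 3 {1, 2} = 4) ∧
      (σ 4 {2, 0} = 1 ∧ σ 5 {2, 0} = 0) := by
  have pareto_on : ∀ Q : Set (Fin 3), ∀ A : Set (Fin 6), {x | comm6 x ∈ Q} = A →
      IsPareto P A (fun x => σ x Q) := fun Q _ hA => hA ▸ hσ Q
  refine ⟨IsPareto.cross rfl rfl rfl rfl (by decide) (by decide) (P.trans _ _ _ _ hmA1 hmA2)
      (P.trans _ _ _ _ hwA1 hwA2) hmB2 hwB2 (pareto_on _ _ ?_),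
    IsPareto.cross rfl rfl rfl rfl (by decide) (by decide) (P.trans _ _ _ _ hmB1 hmB2)
      (P.trans _ _ _ _ hwB1 hwB2) hmD2 hwD2 (pareto_on _ _ ?_),
    IsPareto.cross rfl rfl rfl rfl (by decide) (by decide) (P.trans _ _ _ _ hmD1 hmD2)
      (P.trans _ _ _ _ hwD1 hwD2) hmA2 hwA2 (pareto_on _ _ ?_)⟩ <;>
    ext x <;> fin_cases x <;> decide

/-- **The example of Proposition 2.** With three communities `A, B, D`, each of
one man and one woman, and the cyclic preferences
`m^A : w^B ≻ w^D ≻ w^A`, `m^B : w^D ≻ w^A ≻ w^B`, `m^D : w^A ≻ w^B ≻ w^D`,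
`w^A : m^B ≻ m^D ≻ m^A`, `w^B : m^D ≻ m^A ≻ m^B`, `w^D : m^A ≻ m^B ≻ m^D`:
(i) every Pareto optimal matching scheme `σ` satisfies `σ(w^A,{A,B}) = m^B`,
`σ(w^B,{B,D}) = m^D`, `σ(w^D,{D,A}) = m^A`; (ii) no matching of all six agents
gives every agent a partner weakly preferred to the one listed above
(`w^B` for `m^A`, `m^B` for `w^A`, `w^D` for `m^B`, `m^D` for `w^B`,
`w^A` for `m^D`, `m^A` for `w^D`); and consequently (iii) no Pareto optimal
matching scheme for this profile is integration monotonic. -/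
theorem pareto_cyclic_example
    (P : Prefs (Fin 6) man6)
    (hmA1 : P.pref 0 3 5) (hmA2 : P.pref 0 5 1)  -- m^A : w^B ≻ w^D ≻ w^A
    (hmB1 : P.pref 2 5 1) (hmB2 : P.pref 2 1 3)  -- m^B : w^D ≻ w^A ≻ w^B
    (hmD1 : P.pref 4 1 3) (hmD2 : P.pref 4 3 5)  -- m^D : w^A ≻ w^B ≻ w^D
    (hwA1 : P.pref 1 2 4) (hwA2 : P.pref 1 4 0)  -- w^A : m^B ≻ m^D ≻ m^A
    (hwB1 : P.pref 3 4 0) (hwB2 : P.pref 3 0 2)  -- w^B : m^D ≻ m^A ≻ m^B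
    (hwD1 : P.pref 5 0 2) (hwD2 : P.pref 5 2 4)  -- w^D : m^A ≻ m^B ≻ m^D
    :
    (∀ σ : Fin 6 → Set (Fin 3) → Fin 6,
        (∀ Q : Set (Fin 3), IsPareto P {x | comm6 x ∈ Q} (fun x => σ x Q)) →
        σ 1 {0, 1} = 2 ∧ σ 3 {1, 2} = 4 ∧ σ 5 {2, 0} = 0) ∧
    (¬ ∃ μ : Fin 6 → Fin 6, IsMatching man6 Set.univ μ ∧
        P.weakPref 0 (μ 0) 3 ∧ P.weakPref 1 (μ 1) 2 ∧
        P.weakPref 2 (μ 2) 5 ∧ P.weakPref 3 (μ 3) 4 ∧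
        P.weakPref 4 (μ 4) 1 ∧ P.weakPref 5 (μ 5) 0) ∧
    (∀ σ : Fin 6 → Set (Fin 3) → Fin 6,
        (∀ Q : Set (Fin 3), IsPareto P {x | comm6 x ∈ Q} (fun x => σ x Q)) →
        ¬ (∀ Q Q' : Set (Fin 3), Disjoint Q Q' → ∀ x : Fin 6, comm6 x ∈ Q →
            P.weakPref x (σ x (Q ∪ Q')) (σ x Q))) := by
  have pairs :=
    partners_on_pairs_of_isPareto hmA1 hmA2 hmB1 hmB2 hmD1 hmD2 hwA1 hwA2 hwB1 hwB2 hwD1 hwD2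
  have not_targets : ¬ ∃ μ : Fin 6 → Fin 6, IsMatching man6 Set.univ μ ∧
      P.weakPref 0 (μ 0) 3 ∧ P.weakPref 1 (μ 1) 2 ∧
      P.weakPref 2 (μ 2) 5 ∧ P.weakPref 3 (μ 3) 4 ∧
      P.weakPref 4 (μ 4) 1 ∧ P.weakPref 5 (μ 5) 0 := fun ⟨_, hμ, h0, _, _, h3, _⟩ =>
    hμ.not_weakPref_and_weakPref (Set.mem_univ 0)
      (Prefs.isFavorite_univ_zero_three hmA1 hmA2) hwB1 ⟨h0, h3⟩
  refine ⟨fun σ hσ => ?_, not_targets, fun σ hσ hIM => not_targets ?_⟩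
  · obtain ⟨⟨-, h1⟩, ⟨-, h3⟩, ⟨-, h5⟩⟩ := pairs σ hσ
    exact ⟨h1, h3, h5⟩
  · have grow : ∀ Q x, comm6 x ∈ Q → P.weakPref x (σ x Set.univ) (σ x Q) := fun Q x hx =>
      Set.union_compl_self Q ▸ hIM Q Qᶜ disjoint_compl_right x hx
    obtain ⟨⟨h0, h1⟩, ⟨h2, h3⟩, ⟨h4, h5⟩⟩ := pairs σ hσ
    refine ⟨fun x => σ x Set.univ, by simpa using (hσ Set.univ).1, h0 ▸ grow _ 0 (Or.inl rfl),
      h1 ▸ grow _ 1 (Or.inl rfl), h2 ▸ grow _ 2 (Or.inl rfl), h3 ▸ grow _ 3 (Or.inl rfl),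
      h4 ▸ grow _ 4 (Or.inl rfl), h5 ▸ grow _ 5 (Or.inl rfl)⟩
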